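/- arXiv:1912.12642 — 2 statements merged into one kernel-verified Lean document; each statement's English description precedes it below -/
import Mathlib

section
/- Let (M, η, ω) be a closed connected cosymplectic manifold and let Φ = {φ_t} be any co-Hamiltonian isotopy of (M, η, ω). Then the function x ↦ ∫₀¹ η(φ̇_s)(φ_s(x)) ds on M is identically zero. -/
open Manifold MeasureTheory Function Set

noncomputable section

variable {E : Type*} [NormedAddCommGroup E] [NormedSpace ℝ E]
variable {M : Type*} [TopologicalSpace M] [ChartedSpace E M]

/-- differential of a self-map of `M`, with the canonical identification of tangent spaces. -/
def mfdSelf (f : M → M) (x : M) : E →L[ℝ] E := mfderiv 𝓘(ℝ, E) 𝓘(ℝ, E) f x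

/-- differential of a map from the model space into `M`. -/
def mfdIn (f : E → M) (y : E) : E →L[ℝ] E := mfderiv 𝓘(ℝ, E) 𝓘(ℝ, E) f y

/-- local representative of a 1-form in the preferred chart at `x₀`. -/
def oneFormLocal (η : M → E →L[ℝ] ℝ) (x₀ : M) : E → E →L[ℝ] ℝ := fun y =>
  (η ((extChartAt 𝓘(ℝ, E) x₀).symm y)).comp (mfdIn (extChartAt 𝓘(ℝ, E) x₀).symm y)

/-- A (smooth) 1-form is closed iff the antisymmetrized derivative of its local
representative vanishes everywhere. -/
def IsClosedOneForm (η : M → E →L[ℝ] ℝ) : Prop :=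
  ∀ x₀ : M, ∀ u v : E,
    fderiv ℝ (oneFormLocal η x₀) (extChartAt 𝓘(ℝ, E) x₀ x₀) u v =
    fderiv ℝ (oneFormLocal η x₀) (extChartAt 𝓘(ℝ, E) x₀ x₀) v u

/-- local representative of a 2-form in the preferred chart at `x₀`. -/
def twoFormLocal (ω : M → E →L[ℝ] E →L[ℝ] ℝ) (x₀ : M) : E → E →L[ℝ] E →L[ℝ] ℝ := fun y =>
  (((ω ((extChartAt 𝓘(ℝ, E) x₀).symm y)).comp
      (mfdIn (extChartAt 𝓘(ℝ, E) x₀).symm y)).flip.comp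
      (mfdIn (extChartAt 𝓘(ℝ, E) x₀).symm y)).flip

/-- A (smooth) 2-form is closed iff the cyclic sum of the derivative of its local
representative vanishes everywhere. -/
def IsClosedTwoForm (ω : M → E →L[ℝ] E →L[ℝ] ℝ) : Prop :=
  ∀ x₀ : M, ∀ u v w : E,
    fderiv ℝ (twoFormLocal ω x₀) (extChartAt 𝓘(ℝ, E) x₀ x₀) u v w +
    fderiv ℝ (twoFormLocal ω x₀) (extChartAt 𝓘(ℝ, E) x₀ x₀) v w u +
    fderiv ℝ (twoFormLocal ω x₀) (extChartAt 𝓘(ℝ, E) x₀ x₀) w u v = 0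

/-- cosymplectic structure `(η, ω)` on the manifold `M`. -/
structure IsCosymplectic (η : M → E →L[ℝ] ℝ) (ω : M → E →L[ℝ] E →L[ℝ] ℝ) : Prop where
  smooth_eta : ContMDiff 𝓘(ℝ, E) 𝓘(ℝ, E →L[ℝ] ℝ) (⊤ : ℕ∞) η
  smooth_omega : ContMDiff 𝓘(ℝ, E) 𝓘(ℝ, E →L[ℝ] E →L[ℝ] ℝ) (⊤ : ℕ∞) ω
  antisymm : ∀ x u v, ω x u v = - ω x v u
  closed_eta : IsClosedOneForm η
  closed_omega : IsClosedTwoForm ω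
  nondeg : ∀ x : M, Function.Bijective fun u : E => ω x u + η x u • η x

/-- velocity vector `φ̇ₜ(x) ∈ T_{φₜ(x)}M ≃ E` of an isotopy. -/
def isoVel (φ : ℝ → M → M) (t : ℝ) (x : M) : E :=
  mfderiv 𝓘(ℝ, ℝ) 𝓘(ℝ, E) (fun s => φ s x) t (show TangentSpace 𝓘(ℝ, ℝ) t from (1:ℝ))

/-- the function `C(Φ, η)ᵗ : x ↦ η(φ̇ₜ)(φₜ(x))`. -/
def Cfun (η : M → E →L[ℝ] ℝ) (φ : ℝ → M → M) (t : ℝ) (x : M) : ℝ :=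
  η (φ t x) (isoVel φ t x)

structure IsCosymplecticIsotopy (η : M → E →L[ℝ] ℝ) (ω : M → E →L[ℝ] E →L[ℝ] ℝ)
    (φ : ℝ → M → M) : Prop where
  smooth : ContMDiff (𝓘(ℝ, ℝ).prod 𝓘(ℝ, E)) 𝓘(ℝ, E) (⊤ : ℕ∞) fun p : ℝ × M => φ p.1 p.2
  init : ∀ x, φ 0 x = x
  bij : ∀ t, Function.Bijective (φ t)
  pull_eta : ∀ t x (v : E), η (φ t x) (mfdSelf (φ t) x v) = η x v
  pull_omega : ∀ t x (u v : E),
    ω (φ t x) (mfdSelf (φ t) x u) (mfdSelf (φ t) x v) = ω x u v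

/-- co-Hamiltonian isotopy with generator `F`, i.e. `I_{η,ω}(φ̇ₜ) = dFₜ`. -/
structure IsCoHamIsotopy (η : M → E →L[ℝ] ℝ) (ω : M → E →L[ℝ] E →L[ℝ] ℝ)
    (φ : ℝ → M → M) (F : ℝ → M → ℝ) extends IsCosymplecticIsotopy η ω φ : Prop where
  smoothF : ContMDiff (𝓘(ℝ, ℝ).prod 𝓘(ℝ, E)) 𝓘(ℝ, ℝ) (⊤ : ℕ∞) fun p : ℝ × M => F p.1 p.2
  ham : ∀ t x (v : E),
    ω (φ t x) (isoVel φ t x) v + η (φ t x) (isoVel φ t x) * η (φ t x) v =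
      mfderiv 𝓘(ℝ, E) 𝓘(ℝ, ℝ) (F t) (φ t x) v

/-- oscillation of a function. -/
def osc {N : Type*} (f : N → ℝ) : ℝ := sSup (range f) - sInf (range f)

/-- `L^{(1,∞)}` co-Hofer length. -/
def lCH1 (η : M → E →L[ℝ] ℝ) (φ : ℝ → M → M) (F : ℝ → M → ℝ) : ℝ :=
  ∫ t in (0:ℝ)..1, (osc (F t) + ⨆ x : M, |Cfun η φ t x|)

/-- `L^∞` co-Hofer length. -/
def lCHtop (η : M → E →L[ℝ] ℝ) (φ : ℝ → M → M) (F : ℝ → M → ℝ) : ℝ :=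
  ⨆ t : Icc (0:ℝ) 1, (osc (F t.1) + ⨆ x : M, |Cfun η φ t.1 x|)

def DCH1 (η : M → E →L[ℝ] ℝ) (φ : ℝ → M → M) (F : ℝ → M → ℝ)
    (ψ : ℝ → M → M) (G : ℝ → M → ℝ) : ℝ :=
  ∫ t in (0:ℝ)..1,
    (osc (fun x : M => F t x - G t x) + ⨆ x : M, |Cfun η φ t x - Cfun η ψ t x|)

def DCHtop (η : M → E →L[ℝ] ℝ) (φ : ℝ → M → M) (F : ℝ → M → ℝ)
    (ψ : ℝ → M → M) (G : ℝ → M → ℝ) : ℝ :=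
  ⨆ t : Icc (0:ℝ) 1,
    (osc (fun x : M => F t.1 x - G t.1 x) + ⨆ x : M, |Cfun η φ t.1 x - Cfun η ψ t.1 x|)

def hamNorm (ξ : ℝ → ℝ) : ℝ :=
  (⨆ t : Icc (0:ℝ) 1, |ξ t.1|) + ∫ t in (0:ℝ)..1, |deriv ξ t|

def BoundaryFlat (F : ℝ → M → ℝ) : Prop :=
  ∃ δ ∈ Ioo (0:ℝ) 1, ∀ t ∈ Ico (0:ℝ) δ ∪ Ioc (1 - δ) 1, ∀ x : M, F t x = 0

/-!
Write `X_t` for the generating field, so that `I_{η,ω}(X_t) = dF_t`. As `ω(X_t, X_t) = 0`, the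
derivative of `s ↦ F_t (φ_s x)` at `s = t` is `η(φ̇_t)(φ_t x)²`. As a function of `x` this is
locally constant: its differential is `∂_s (φ_s^* dF_t) = I_{η,ω}(∂_s (φ_s^* X_t))` at `s = t`,
because every `φ_s` preserves `η` and `ω`, and `∂_s (φ_s^* X_t) = φ_t^* [X_t, X_t] = 0`; in charts
this is the symmetry of the second derivative of the flow. On a connected manifold it is hence
constant, and it vanishes at the preimage under `φ_t` of a maximum point of `F_t`. So `η(φ̇_t)`
vanishes identically.
-/

open Filter Topology ContinuousLinearMap

section PartialDerivatives

variable {X : Type*} [NormedAddCommGroup X] [NormedSpace ℝ X] {f : ℝ × E → X} {t : ℝ} {a : E}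

theorem DifferentiableAt.hasDerivAt_partial_fst (hf : DifferentiableAt ℝ f (t, a)) :
    HasDerivAt (fun σ => f (σ, a)) (fderiv ℝ f (t, a) (1, 0)) t :=
  hf.hasFDerivAt.comp_hasDerivAt t ((hasDerivAt_id t).prodMk (hasDerivAt_const t a))

theorem DifferentiableAt.hasFDerivAt_partial_snd (hf : DifferentiableAt ℝ f (t, a)) :
    HasFDerivAt (fun u => f (t, u)) (fderiv ℝ f (t, a) ∘L inr ℝ ℝ E) a :=
  hf.hasFDerivAt.comp a (hasFDerivAt_prodMk_right t a)

theorem hasFDerivAt_partial_fst_eq_zero (hf : ContDiffAt ℝ 2 f (t, a))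
    (h : HasDerivAt (fun σ => fderiv ℝ f (σ, a) ∘L inr ℝ ℝ E) 0 t) :
    HasFDerivAt (fun u => fderiv ℝ f (t, u) (1, 0)) (0 : E →L[ℝ] X) a := by
  have hDf : DifferentiableAt ℝ (fderiv ℝ f) (t, a) :=
    (hf.fderiv_right (m := 1) (by norm_num)).differentiableAt (by norm_num)
  have hmixed : fderiv ℝ (fderiv ℝ f) (t, a) (1, 0) ∘L inr ℝ ℝ E = 0 := by
    simpa using (hDf.hasDerivAt_partial_fst.clm_comp (hasDerivAt_const t (inr ℝ ℝ E))).unique h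
  refine ((apply ℝ X ((1 : ℝ), (0 : E))).hasFDerivAt.comp a
    hDf.hasFDerivAt_partial_snd).congr_fderiv ?_
  ext w
  rw [ContinuousLinearMap.comp_apply, ContinuousLinearMap.comp_apply, inr_apply, apply_apply,
    ← hf.isSymmSndFDerivAt (by simp)]
  exact DFunLike.congr_fun hmixed w

end PartialDerivatives

section PullbackVelocity

variable [CompleteSpace E] {ψ : ℝ × E → E} {t₀ : ℝ} {a : E}

theorem exists_hasDerivAt_partial_preimage (hψ : ContDiffAt ℝ 1 ψ (t₀, a)) {e : E ≃L[ℝ] E}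
    (he : (e : E →L[ℝ] E) = fderiv ℝ ψ (t₀, a) ∘L inr ℝ ℝ E) :
    ∃ b : ℝ → E, b t₀ = a ∧ HasDerivAt b (e.symm (fderiv ℝ ψ (t₀, a) (1, 0))) t₀ ∧
      ∀ᶠ σ in 𝓝 t₀, ψ (t₀, b σ) = ψ (σ, a) := by
  have hdiff : DifferentiableAt ℝ ψ (t₀, a) := hψ.differentiableAt one_ne_zero
  have hstrict : HasStrictFDerivAt (fun u => ψ (t₀, u)) (e : E →L[ℝ] E) a :=
    (hψ.comp a (contDiffAt_const.prodMk contDiffAt_id)).hasStrictFDerivAt'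
      (he ▸ hdiff.hasFDerivAt_partial_snd) one_ne_zero
  have hinv := hstrict.to_localInverse.hasFDerivAt.comp_hasDerivAt t₀ hdiff.hasDerivAt_partial_fst
  refine ⟨fun σ => hstrict.localInverse _ _ a (ψ (σ, a)), hstrict.localInverse_apply_image,
    hinv, ?_⟩
  exact hdiff.hasDerivAt_partial_fst.continuousAt.eventually hstrict.eventually_right_inverse

/-- Read `ψ` as a flow `ψ_σ` in coordinates and `Y σ` as the pullback by `ψ_σ` of the velocity
field at time `t₀`; then `Y' = 0` is the coordinate form of `[X, X] = 0`. -/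
theorem eq_zero_of_pullback_velocity (hψ : ContDiffAt ℝ 2 ψ (t₀, a))
    (hB : (fderiv ℝ ψ (t₀, a) ∘L inr ℝ ℝ E).IsInvertible)
    {Y : ℝ → E} {Y' : E} (hY : HasDerivAt Y Y' t₀)
    (hYψ : ∀ᶠ p in 𝓝 (t₀, a), ψ (t₀, p.2) = ψ (p.1, a) →
      fderiv ℝ ψ (p.1, a) (0, Y p.1) = fderiv ℝ ψ (t₀, p.2) (1, 0)) :
    Y' = 0 := by
  obtain ⟨e, he⟩ := hB
  obtain ⟨b, hb₀, hb, hψb⟩ := exists_hasDerivAt_partial_preimage (hψ.of_le one_le_two) he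
  set D2 := fderiv ℝ (fderiv ℝ ψ) (t₀, a)
  have hDψ : DifferentiableAt ℝ (fderiv ℝ ψ) (t₀, a) :=
    (hψ.fderiv_right (m := 1) (by norm_num)).differentiableAt (by norm_num)
  have hpush : ∀ᶠ σ in 𝓝 t₀, fderiv ℝ ψ (σ, a) (0, Y σ) = fderiv ℝ ψ (t₀, b σ) (1, 0) := by
    have hlim : Tendsto (fun σ => (σ, b σ)) (𝓝 t₀) (𝓝 (t₀, a)) := by
      simpa [hb₀] using (continuousAt_id.prodMk hb.continuousAt).tendsto
    filter_upwards [hlim.eventually hYψ, hψb] with σ h h' using h h'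
  have he_apply (v : E) : e v = fderiv ℝ ψ (t₀, a) (0, v) := DFunLike.congr_fun he v
  have hYt₀ : Y t₀ = e.symm (fderiv ℝ ψ (t₀, a) (1, 0)) := by
    rw [e.eq_symm_apply, he_apply]
    simpa [hb₀] using hpush.self_of_nhds
  have hlhs : HasDerivAt (fun σ => fderiv ℝ ψ (σ, a) (0, Y σ))
      (D2 (1, 0) (0, Y t₀) + fderiv ℝ ψ (t₀, a) (0, Y')) t₀ :=
    hDψ.hasDerivAt_partial_fst.clm_apply ((hasDerivAt_const t₀ 0).prodMk hY)
  have hrhs : HasDerivAt (fun σ => fderiv ℝ ψ (t₀, b σ) (1, 0))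
      (D2 (0, e.symm (fderiv ℝ ψ (t₀, a) (1, 0))) (1, 0)) t₀ := by
    have hT : HasFDerivAt (fun u => fderiv ℝ ψ (t₀, u) (1, 0))
        ((apply ℝ E ((1 : ℝ), (0 : E))) ∘L D2 ∘L inr ℝ ℝ E) (b t₀) :=
      hb₀ ▸ (apply ℝ E ((1 : ℝ), (0 : E))).hasFDerivAt.comp a hDψ.hasFDerivAt_partial_snd
    exact hT.comp_hasDerivAt t₀ hb
  have hsum := hlhs.unique (hrhs.congr_of_eventuallyEq hpush)
  rw [hYt₀, hψ.isSymmSndFDerivAt (by simp)] at hsum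
  exact e.injective (by rw [he_apply, map_zero]; exact add_eq_left.mp hsum)

end PullbackVelocity

section Charts

variable {X : Type*} [NormedAddCommGroup X] [NormedSpace ℝ X]

theorem hasMFDerivAt_iff_hasFDerivAt_comp_extChartAt_symm {g : M → X} {x : M}
    {g' : E →L[ℝ] X} :
    HasMFDerivAt 𝓘(ℝ, E) 𝓘(ℝ, X) g x g' ↔ ContinuousAt g x ∧
      HasFDerivAt (g ∘ (extChartAt 𝓘(ℝ, E) x).symm) g' (extChartAt 𝓘(ℝ, E) x x) := by
  simp only [HasMFDerivAt, writtenInExtChartAt, extChartAt_model_space_eq_id,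
    modelWithCornersSelf_coe, range_id, PartialEquiv.refl_coe, id_comp]
  exact and_congr_right fun _ => hasFDerivWithinAt_univ

theorem HasFDerivAt.hasMFDerivAt_of_comp_extChartAt_symm {g : M → X} {x : M} {g' : E →L[ℝ] X}
    (h : HasFDerivAt (g ∘ (extChartAt 𝓘(ℝ, E) x).symm) g' (extChartAt 𝓘(ℝ, E) x x)) :
    HasMFDerivAt 𝓘(ℝ, E) 𝓘(ℝ, X) g x g' := by
  refine hasMFDerivAt_iff_hasFDerivAt_comp_extChartAt_symm.mpr ⟨?_, h⟩
  refine (h.continuousAt.comp_of_eq (continuousAt_extChartAt x) rfl).congr ?_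
  filter_upwards [extChartAt_source_mem_nhds (I := 𝓘(ℝ, E)) x] with y hy
  exact congrArg g ((extChartAt 𝓘(ℝ, E) x).left_inv hy)

theorem contMDiffAt_extChartAt_symm_of_mem_target {n : WithTop ℕ∞} [IsManifold 𝓘(ℝ, E) n M]
    {x : M} {u : E} (hu : u ∈ (extChartAt 𝓘(ℝ, E) x).target) :
    ContMDiffAt 𝓘(ℝ, E) 𝓘(ℝ, E) n (extChartAt 𝓘(ℝ, E) x).symm u :=
  (contMDiffOn_extChartAt_symm x).contMDiffAt ((isOpen_extChartAt_target x).mem_nhds hu)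

theorem isLocallyConstant_of_hasMFDerivAt_zero [IsManifold 𝓘(ℝ, E) 1 M] {g : M → X}
    (hg : ∀ x, HasMFDerivAt 𝓘(ℝ, E) 𝓘(ℝ, X) g x 0) : IsLocallyConstant g := by
  rw [IsLocallyConstant.iff_eventually_eq]
  intro x₀
  set c := extChartAt 𝓘(ℝ, E) x₀
  have hderiv : ∀ u ∈ c.target, HasFDerivAt (g ∘ c.symm) (0 : E →L[ℝ] X) u := fun u hu => by
    have hsymm := (contMDiffAt_extChartAt_symm_of_mem_target (n := 1) hu).mdifferentiableAt
      one_ne_zero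
    have := hasMFDerivAt_iff_hasFDerivAt.mp ((hg (c.symm u)).comp u hsymm.hasMFDerivAt)
    rwa [zero_comp] at this
  have hopen := (isOpen_extChartAt_target x₀).isOpen_inter_preimage_of_fderiv_eq_zero
    (fun u hu => (hderiv u hu).differentiableAt.differentiableWithinAt)
    (fun u hu => (hderiv u hu).fderiv) {g x₀}
  have hnhds : c ⁻¹' (c.target ∩ (g ∘ c.symm) ⁻¹' {g x₀}) ∈ 𝓝 x₀ :=
    (continuousAt_extChartAt x₀).preimage_mem_nhds
      (hopen.mem_nhds ⟨mem_extChartAt_target x₀, by simp [c]⟩)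
  filter_upwards [extChartAt_source_mem_nhds (I := 𝓘(ℝ, E)) x₀, hnhds] with y hy hy'
  simpa [c.left_inv hy] using hy'.2

end Charts

section Flows

variable {X : Type*} [NormedAddCommGroup X] [NormedSpace ℝ X] {φ : ℝ → M → M}

theorem hasDerivAt_comp_flow {g : M → X} {t : ℝ} {x : M}
    (hφ : MDifferentiableAt 𝓘(ℝ, ℝ) 𝓘(ℝ, E) (fun s => φ s x) t)
    (hg : MDifferentiableAt 𝓘(ℝ, E) 𝓘(ℝ, X) g (φ t x)) :
    HasDerivAt (fun s => g (φ s x))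
      ((mfderiv 𝓘(ℝ, E) 𝓘(ℝ, X) g (φ t x) : E →L[ℝ] X) (isoVel (E := E) φ t x)) t := by
  refine hasDerivAt_iff_hasFDerivAt.mpr ((hasMFDerivAt_iff_hasFDerivAt.mp
    (hg.hasMFDerivAt.comp t hφ.hasMFDerivAt)).congr_fderiv ?_)
  ext
  exact (one_smul ℝ _).symm

def flowInChart (φ : ℝ → M → M) (x₀ : M) (g : M → X) (p : ℝ × E) : X :=
  g (φ p.1 ((extChartAt 𝓘(ℝ, E) x₀).symm p.2))

theorem contDiffAt_flowInChart {n : WithTop ℕ∞} [IsManifold 𝓘(ℝ, E) n M]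
    (hφ : ContMDiff (𝓘(ℝ, ℝ).prod 𝓘(ℝ, E)) 𝓘(ℝ, E) n fun p : ℝ × M => φ p.1 p.2)
    {x₀ : M} {g : M → X} {σ : ℝ} {u : E} (hu : u ∈ (extChartAt 𝓘(ℝ, E) x₀).target)
    (hg : ContMDiffAt 𝓘(ℝ, E) 𝓘(ℝ, X) n g (φ σ ((extChartAt 𝓘(ℝ, E) x₀).symm u))) :
    ContDiffAt ℝ n (flowInChart φ x₀ g) (σ, u) := by
  have hpair : ContMDiffAt (𝓘(ℝ, ℝ).prod 𝓘(ℝ, E)) (𝓘(ℝ, ℝ).prod 𝓘(ℝ, E)) n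
      (fun p : ℝ × E => (p.1, (extChartAt 𝓘(ℝ, E) x₀).symm p.2)) (σ, u) :=
    contMDiffAt_fst.prodMk ((contMDiffAt_extChartAt_symm_of_mem_target hu).comp _ contMDiffAt_snd)
  have h := hg.comp (σ, u) ((hφ _).comp (σ, u) hpair)
  rw [← modelWithCornersSelf_prod, chartedSpaceSelf_prod] at h
  exact h.contDiffAt

theorem fderiv_flowInChart_comp_inr {x₀ : M} {g : M → X} {σ : ℝ}
    (hd : DifferentiableAt ℝ (flowInChart φ x₀ g) (σ, extChartAt 𝓘(ℝ, E) x₀ x₀))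
    (hφ : MDifferentiableAt 𝓘(ℝ, E) 𝓘(ℝ, E) (φ σ) x₀)
    (hg : MDifferentiableAt 𝓘(ℝ, E) 𝓘(ℝ, X) g (φ σ x₀)) :
    fderiv ℝ (flowInChart φ x₀ g) (σ, extChartAt 𝓘(ℝ, E) x₀ x₀) ∘L inr ℝ ℝ E =
      (mfderiv 𝓘(ℝ, E) 𝓘(ℝ, X) g (φ σ x₀) : E →L[ℝ] X) ∘L mfdSelf (E := E) (φ σ) x₀ :=
  hd.hasFDerivAt_partial_snd.unique
    (hasMFDerivAt_iff_hasFDerivAt_comp_extChartAt_symm.mp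
      (hg.hasMFDerivAt.comp x₀ hφ.hasMFDerivAt)).2

theorem fderiv_flowInChart_apply_time {x₀ : M} {g : M → X} {t : ℝ} {u : E}
    (hd : DifferentiableAt ℝ (flowInChart φ x₀ g) (t, u))
    (hφ : MDifferentiableAt 𝓘(ℝ, ℝ) 𝓘(ℝ, E) (fun s => φ s ((extChartAt 𝓘(ℝ, E) x₀).symm u)) t)
    (hg : MDifferentiableAt 𝓘(ℝ, E) 𝓘(ℝ, X) g (φ t ((extChartAt 𝓘(ℝ, E) x₀).symm u))) :
    fderiv ℝ (flowInChart φ x₀ g) (t, u) (1, 0) =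
      (mfderiv 𝓘(ℝ, E) 𝓘(ℝ, X) g (φ t ((extChartAt 𝓘(ℝ, E) x₀).symm u)) : E →L[ℝ] X)
        (isoVel (E := E) φ t ((extChartAt 𝓘(ℝ, E) x₀).symm u)) :=
  hd.hasDerivAt_partial_fst.unique (hasDerivAt_comp_flow hφ hg)

end Flows

theorem ContinuousLinearMap.isInvertible_of_bijective [FiniteDimensional ℝ E] {Z : Type*}
    [NormedAddCommGroup Z] [NormedSpace ℝ Z] {f : E →L[ℝ] Z} (hf : Bijective f) :
    f.IsInvertible :=
  ⟨(LinearEquiv.ofBijective (f : E →ₗ[ℝ] Z) hf).toContinuousLinearEquiv, rfl⟩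

section Cosymplectic

variable {η : M → E →L[ℝ] ℝ} {ω : M → E →L[ℝ] E →L[ℝ] ℝ} {φ : ℝ → M → M} {F : ℝ → M → ℝ}

/-- The paper's `I_{η,ω}` at a point. -/
def cosymplecticFlat (η : E →L[ℝ] ℝ) (ω : E →L[ℝ] E →L[ℝ] ℝ) : E →L[ℝ] E →L[ℝ] ℝ :=
  ω + η.smulRight η

@[simp]
theorem cosymplecticFlat_apply (η : E →L[ℝ] ℝ) (ω : E →L[ℝ] E →L[ℝ] ℝ) (u v : E) :
    cosymplecticFlat η ω u v = ω u v + η u * η v := by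
  simp [cosymplecticFlat]

theorem IsCosymplectic.bijective_flat (hcos : IsCosymplectic η ω) (x : M) :
    Bijective (cosymplecticFlat (η x) (ω x)) :=
  hcos.nondeg x

theorem IsCosymplecticIsotopy.flat_mfdSelf (hΦ : IsCosymplecticIsotopy η ω φ) (t : ℝ) (x : M)
    (u v : E) :
    cosymplecticFlat (η (φ t x)) (ω (φ t x)) (mfdSelf (φ t) x u) (mfdSelf (φ t) x v) =
      cosymplecticFlat (η x) (ω x) u v := by
  simp [hΦ.pull_omega, hΦ.pull_eta]

theorem IsCosymplecticIsotopy.bijective_mfdSelf [FiniteDimensional ℝ E]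
    (hcos : IsCosymplectic η ω) (hΦ : IsCosymplecticIsotopy η ω φ) (t : ℝ) (x : M) :
    Bijective (mfdSelf (E := E) (φ t) x) := by
  have hinj : Injective (mfdSelf (E := E) (φ t) x) := fun u v huv =>
    (hcos.bijective_flat x).1 (by ext w; rw [← hΦ.flat_mfdSelf, huv, hΦ.flat_mfdSelf])
  exact ⟨hinj, LinearMap.injective_iff_surjective.mp hinj⟩

theorem IsCosymplecticIsotopy.mfdSelf_apply_eq [FiniteDimensional ℝ E]
    (hcos : IsCosymplectic η ω) (hΦ : IsCosymplecticIsotopy η ω φ) {t : ℝ} {x : M} {v w : E}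
    {ℓ : E →L[ℝ] ℝ} (hv : cosymplecticFlat (η x) (ω x) v = ℓ ∘L mfdSelf (φ t) x)
    (hw : cosymplecticFlat (η (φ t x)) (ω (φ t x)) w = ℓ) :
    mfdSelf (φ t) x v = w := by
  refine (hcos.bijective_flat (φ t x)).1 (ContinuousLinearMap.ext fun u' => ?_)
  obtain ⟨u, rfl⟩ := (hΦ.bijective_mfdSelf hcos t x).2 u'
  rw [hΦ.flat_mfdSelf, hv, hw]
  rfl

theorem IsCoHamIsotopy.flat_isoVel (hΦ : IsCoHamIsotopy η ω φ F) (t : ℝ) (x : M) :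
    cosymplecticFlat (η (φ t x)) (ω (φ t x)) (isoVel φ t x) =
      mfderiv 𝓘(ℝ, E) 𝓘(ℝ, ℝ) (F t) (φ t x) := by
  ext v
  rw [cosymplecticFlat_apply]
  exact hΦ.ham t x v

theorem IsCosymplecticIsotopy.mdifferentiableAt_curve (hΦ : IsCosymplecticIsotopy η ω φ)
    (t : ℝ) (x : M) : MDifferentiableAt 𝓘(ℝ, ℝ) 𝓘(ℝ, E) (fun s => φ s x) t :=
  ((hΦ.smooth.comp (contMDiff_id.prodMk contMDiff_const)) t).mdifferentiableAt (by simp)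

theorem IsCosymplecticIsotopy.mdifferentiableAt_map (hΦ : IsCosymplecticIsotopy η ω φ)
    (t : ℝ) (x : M) : MDifferentiableAt 𝓘(ℝ, E) 𝓘(ℝ, E) (φ t) x :=
  ((hΦ.smooth.comp (contMDiff_const.prodMk contMDiff_id)) x).mdifferentiableAt (by simp)

theorem IsCosymplecticIsotopy.contDiffAt_flowInChart [IsManifold 𝓘(ℝ, E) 2 M] {X : Type*}
    [NormedAddCommGroup X] [NormedSpace ℝ X] (hΦ : IsCosymplecticIsotopy η ω φ) {x₀ : M}
    {g : M → X} {σ : ℝ} {u : E}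
    (hu : u ∈ (extChartAt 𝓘(ℝ, E) x₀).target)
    (hg : ContMDiffAt 𝓘(ℝ, E) 𝓘(ℝ, X) 2 g (φ σ ((extChartAt 𝓘(ℝ, E) x₀).symm u))) :
    ContDiffAt ℝ 2 (flowInChart φ x₀ g) (σ, u) :=
  _root_.contDiffAt_flowInChart (hΦ.smooth.of_le ENat.LEInfty.out) hu hg

theorem IsCosymplecticIsotopy.eventually_mem_extChartAt (hΦ : IsCosymplecticIsotopy η ω φ)
    (t₀ : ℝ) (x₀ : M) :
    ∀ᶠ p : ℝ × E in 𝓝 (t₀, extChartAt 𝓘(ℝ, E) x₀ x₀), p.2 ∈ (extChartAt 𝓘(ℝ, E) x₀).target ∧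
      φ p.1 x₀ ∈ (extChartAt 𝓘(ℝ, E) (φ t₀ x₀)).source ∧
      φ t₀ ((extChartAt 𝓘(ℝ, E) x₀).symm p.2) ∈ (extChartAt 𝓘(ℝ, E) (φ t₀ x₀)).source := by
  have hcurve := (hΦ.mdifferentiableAt_curve t₀ x₀).continuousAt.comp
    (x := (t₀, extChartAt 𝓘(ℝ, E) x₀ x₀)) continuousAt_fst
  have hslice := ((hΦ.mdifferentiableAt_map t₀ _).continuousAt.comp
    (continuousAt_extChartAt_symm (I := 𝓘(ℝ, E)) x₀)).comp
    (x := (t₀, extChartAt 𝓘(ℝ, E) x₀ x₀)) continuousAt_snd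
  refine (continuousAt_snd.eventually_mem (extChartAt_target_mem_nhds (I := 𝓘(ℝ, E)) x₀)).and
    ((hcurve.eventually_mem (extChartAt_source_mem_nhds _)).and (hslice.eventually_mem ?_))
  show _ ∈ 𝓝 (φ t₀ ((extChartAt 𝓘(ℝ, E) x₀).symm (extChartAt 𝓘(ℝ, E) x₀ x₀)))
  rw [extChartAt_to_inv]
  exact extChartAt_source_mem_nhds _

theorem IsCoHamIsotopy.contMDiff_generator (hΦ : IsCoHamIsotopy η ω φ F) (t : ℝ) :
    ContMDiff 𝓘(ℝ, E) 𝓘(ℝ, ℝ) (⊤ : ℕ∞) (F t) :=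
  hΦ.smoothF.comp (contMDiff_const.prodMk contMDiff_id)

theorem IsCoHamIsotopy.hasDerivAt_generator_comp_flow (hcos : IsCosymplectic η ω)
    (hΦ : IsCoHamIsotopy η ω φ F) (t : ℝ) (x : M) :
    HasDerivAt (fun s => F t (φ s x)) (Cfun η φ t x ^ 2) t := by
  refine (hasDerivAt_comp_flow (hΦ.mdifferentiableAt_curve t x)
    ((hΦ.contMDiff_generator t _).mdifferentiableAt (by simp))).congr_deriv ?_
  have hω := hcos.antisymm (φ t x) (isoVel (E := E) φ t x) (isoVel φ t x)
  have hsq : η (φ t x) (isoVel φ t x) * η (φ t x) (isoVel φ t x) =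
      ω (φ t x) (isoVel φ t x) (isoVel φ t x) +
        η (φ t x) (isoVel φ t x) * η (φ t x) (isoVel φ t x) := by linarith
  rw [Cfun, sq]
  exact (hsq.trans (hΦ.ham t x _)).symm

theorem IsCoHamIsotopy.exists_cfun_eq_zero [CompactSpace M] [Nonempty M]
    (hcos : IsCosymplectic η ω) (hΦ : IsCoHamIsotopy η ω φ F) (t : ℝ) :
    ∃ x, Cfun η φ t x = 0 := by
  obtain ⟨y, -, hy⟩ := isCompact_univ.exists_isMaxOn univ_nonempty
    (hΦ.contMDiff_generator t).continuous.continuousOn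
  obtain ⟨x, rfl⟩ := (hΦ.bij t).2 y
  have hmax : IsLocalMax (fun s => F t (φ s x)) t := Eventually.of_forall fun s => hy (mem_univ _)
  exact ⟨x, pow_eq_zero_iff two_ne_zero |>.mp
    (hmax.hasDerivAt_eq_zero (hΦ.hasDerivAt_generator_comp_flow hcos t x))⟩

end Cosymplectic

section LocallyConstant

variable [FiniteDimensional ℝ E] [IsManifold 𝓘(ℝ, E) 2 M] {η : M → E →L[ℝ] ℝ}
  {ω : M → E →L[ℝ] E →L[ℝ] ℝ} {φ : ℝ → M → M} {F : ℝ → M → ℝ}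

/-- Since `φ_σ` preserves `I_{η,ω}` and `I_{η,ω}(X_{t₀}) = dF_{t₀}`, the vector
`I_{η,ω}⁻¹ (d(F_{t₀} ∘ φ_σ))` at `x₀` is the pullback `φ_σ^* X_{t₀}`. -/
theorem IsCoHamIsotopy.fderiv_flowInChart_pushforward (hcos : IsCosymplectic η ω)
    (hΦ : IsCoHamIsotopy η ω φ F) {x₀ y₀ : M} {t₀ σ : ℝ} {u : E}
    (hu : u ∈ (extChartAt 𝓘(ℝ, E) x₀).target) (hσ : φ σ x₀ ∈ (extChartAt 𝓘(ℝ, E) y₀).source)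
    (hy : φ t₀ ((extChartAt 𝓘(ℝ, E) x₀).symm u) ∈ (extChartAt 𝓘(ℝ, E) y₀).source)
    (heq : flowInChart φ x₀ (extChartAt 𝓘(ℝ, E) y₀) (t₀, u) =
      flowInChart φ x₀ (extChartAt 𝓘(ℝ, E) y₀) (σ, extChartAt 𝓘(ℝ, E) x₀ x₀)) :
    fderiv ℝ (flowInChart φ x₀ (extChartAt 𝓘(ℝ, E) y₀)) (σ, extChartAt 𝓘(ℝ, E) x₀ x₀)
        (0, (cosymplecticFlat (η x₀) (ω x₀)).inverse
          (fderiv ℝ (flowInChart φ x₀ (F t₀)) (σ, extChartAt 𝓘(ℝ, E) x₀ x₀) ∘L inr ℝ ℝ E)) =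
      fderiv ℝ (flowInChart φ x₀ (extChartAt 𝓘(ℝ, E) y₀)) (t₀, u) (1, 0) := by
  set c' := extChartAt 𝓘(ℝ, E) x₀
  set c := extChartAt 𝓘(ℝ, E) y₀
  have hx₀ : c'.symm (c' x₀) = x₀ := extChartAt_to_inv x₀
  have hpt : φ t₀ (c'.symm u) = φ σ x₀ := by
    simp only [flowInChart] at heq
    exact c.injOn hy hσ (hx₀ ▸ heq)
  have hc : ∀ z ∈ c.source, ContMDiffAt 𝓘(ℝ, E) 𝓘(ℝ, E) 2 c z := fun z hz =>
    contMDiffAt_extChartAt' (by rwa [← extChartAt_source (I := 𝓘(ℝ, E))])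
  have hψσ := (hΦ.contDiffAt_flowInChart (mem_extChartAt_target x₀)
    (by rw [hx₀]; exact hc _ hσ)).differentiableAt two_ne_zero
  have hψt := (hΦ.contDiffAt_flowInChart hu (hc _ hy)).differentiableAt two_ne_zero
  have hFσ := (hΦ.contDiffAt_flowInChart (g := F t₀) (σ := σ) (mem_extChartAt_target x₀)
    ((hΦ.contMDiff_generator t₀ _).of_le ENat.LEInfty.out)).differentiableAt two_ne_zero
  have hv : cosymplecticFlat (η x₀) (ω x₀) ((cosymplecticFlat (η x₀) (ω x₀)).inverse
      (fderiv ℝ (flowInChart φ x₀ (F t₀)) (σ, c' x₀) ∘L inr ℝ ℝ E)) =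
      (mfderiv 𝓘(ℝ, E) 𝓘(ℝ, ℝ) (F t₀) (φ σ x₀) : E →L[ℝ] ℝ) ∘L mfdSelf (E := E) (φ σ) x₀ := by
    rw [(isInvertible_of_bijective (hcos.bijective_flat x₀)).self_apply_inverse]
    exact fderiv_flowInChart_comp_inr hFσ (hΦ.mdifferentiableAt_map σ x₀)
      ((hΦ.contMDiff_generator t₀ _).mdifferentiableAt (by simp))
  have hw : cosymplecticFlat (η (φ σ x₀)) (ω (φ σ x₀)) (isoVel φ t₀ (c'.symm u)) =
      mfderiv 𝓘(ℝ, E) 𝓘(ℝ, ℝ) (F t₀) (φ σ x₀) := by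
    rw [← hpt]
    exact hΦ.flat_isoVel t₀ _
  have hpush := DFunLike.congr_fun (fderiv_flowInChart_comp_inr hψσ
    (hΦ.mdifferentiableAt_map σ x₀) ((hc _ hσ).mdifferentiableAt two_ne_zero))
    ((cosymplecticFlat (η x₀) (ω x₀)).inverse
      (fderiv ℝ (flowInChart φ x₀ (F t₀)) (σ, c' x₀) ∘L inr ℝ ℝ E))
  rw [fderiv_flowInChart_apply_time hψt (hΦ.mdifferentiableAt_curve t₀ _)
    ((hc _ hy).mdifferentiableAt two_ne_zero)]
  refine hpush.trans ?_
  rw [hpt]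
  exact congrArg _ (hΦ.mfdSelf_apply_eq hcos hv hw)

theorem IsCoHamIsotopy.hasDerivAt_fderiv_flowInChart_comp_inr (hcos : IsCosymplectic η ω)
    (hΦ : IsCoHamIsotopy η ω φ F) (t₀ : ℝ) (x₀ : M) :
    HasDerivAt (fun σ => fderiv ℝ (flowInChart φ x₀ (F t₀)) (σ, extChartAt 𝓘(ℝ, E) x₀ x₀) ∘L
      inr ℝ ℝ E) 0 t₀ := by
  set c' := extChartAt 𝓘(ℝ, E) x₀
  set c := extChartAt 𝓘(ℝ, E) (φ t₀ x₀)
  have hx₀ : c'.symm (c' x₀) = x₀ := extChartAt_to_inv x₀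
  have hψ : ContDiffAt ℝ 2 (flowInChart φ x₀ c) (t₀, c' x₀) :=
    hΦ.contDiffAt_flowInChart (mem_extChartAt_target x₀) (by rw [hx₀]; exact contMDiffAt_extChartAt)
  have hFh : ContDiffAt ℝ 2 (flowInChart φ x₀ (F t₀)) (t₀, c' x₀) :=
    hΦ.contDiffAt_flowInChart (mem_extChartAt_target x₀)
      ((hΦ.contMDiff_generator t₀ _).of_le ENat.LEInfty.out)
  have hDF : DifferentiableAt ℝ (fderiv ℝ (flowInChart φ x₀ (F t₀))) (t₀, c' x₀) :=
    (hFh.fderiv_right (m := 1) (by norm_num)).differentiableAt (by norm_num)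
  obtain ⟨κ', hκ⟩ : ∃ κ', HasDerivAt
      (fun σ => fderiv ℝ (flowInChart φ x₀ (F t₀)) (σ, c' x₀) ∘L inr ℝ ℝ E) κ' t₀ :=
    ⟨_, hDF.hasDerivAt_partial_fst.clm_comp (hasDerivAt_const t₀ (inr ℝ ℝ E))⟩
  have hB : (fderiv ℝ (flowInChart φ x₀ c) (t₀, c' x₀) ∘L inr ℝ ℝ E).IsInvertible := by
    rw [fderiv_flowInChart_comp_inr (X := E) (hψ.differentiableAt two_ne_zero)
      (hΦ.mdifferentiableAt_map t₀ x₀) ((contMDiffAt_extChartAt (n := 1)).mdifferentiableAt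
        one_ne_zero)]
    exact (isInvertible_mfderiv_extChartAt (mem_extChartAt_source _)).comp
      (isInvertible_of_bijective (f := mfdSelf (E := E) (φ t₀) x₀)
        (hΦ.bijective_mfdSelf hcos t₀ x₀))
  have hzero := eq_zero_of_pullback_velocity hψ hB
    ((cosymplecticFlat (η x₀) (ω x₀)).inverse.hasFDerivAt.comp_hasDerivAt t₀ hκ)
    (by
      filter_upwards [hΦ.eventually_mem_extChartAt t₀ x₀] with p ⟨hu, hσ, hy⟩ heq
      exact hΦ.fderiv_flowInChart_pushforward hcos hu hσ hy heq)
  rwa [← (isInvertible_of_bijective (hcos.bijective_flat x₀)).self_apply_inverse κ', hzero,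
    map_zero] at hκ

theorem IsCoHamIsotopy.hasFDerivAt_sq_cfun_comp_extChartAt_symm (hcos : IsCosymplectic η ω)
    (hΦ : IsCoHamIsotopy η ω φ F) (t₀ : ℝ) (x₀ : M) :
    HasFDerivAt ((fun x => Cfun η φ t₀ x ^ 2) ∘ (extChartAt 𝓘(ℝ, E) x₀).symm) (0 : E →L[ℝ] ℝ)
      (extChartAt 𝓘(ℝ, E) x₀ x₀) := by
  have hFh : ∀ u ∈ (extChartAt 𝓘(ℝ, E) x₀).target,
      ContDiffAt ℝ 2 (flowInChart φ x₀ (F t₀)) (t₀, u) := fun u hu =>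
    hΦ.contDiffAt_flowInChart hu ((hΦ.contMDiff_generator t₀ _).of_le ENat.LEInfty.out)
  refine (hasFDerivAt_partial_fst_eq_zero (hFh _ (mem_extChartAt_target x₀))
    (hΦ.hasDerivAt_fderiv_flowInChart_comp_inr hcos t₀ x₀)).congr_of_eventuallyEq ?_
  filter_upwards [extChartAt_target_mem_nhds (I := 𝓘(ℝ, E)) x₀] with u hu
  exact (((hFh u hu).differentiableAt two_ne_zero).hasDerivAt_partial_fst.unique
    (hΦ.hasDerivAt_generator_comp_flow hcos t₀ ((extChartAt 𝓘(ℝ, E) x₀).symm u))).symm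

theorem IsCoHamIsotopy.isLocallyConstant_sq_cfun (hcos : IsCosymplectic η ω)
    (hΦ : IsCoHamIsotopy η ω φ F) (t : ℝ) : IsLocallyConstant fun x => Cfun η φ t x ^ 2 :=
  isLocallyConstant_of_hasMFDerivAt_zero fun x =>
    (hΦ.hasFDerivAt_sq_cfun_comp_extChartAt_symm hcos t x).hasMFDerivAt_of_comp_extChartAt_symm

theorem IsCoHamIsotopy.cfun_eq_zero [CompactSpace M] [ConnectedSpace M]
    (hcos : IsCosymplectic η ω) (hΦ : IsCoHamIsotopy η ω φ F) (t : ℝ) (x : M) :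
    Cfun η φ t x = 0 := by
  obtain ⟨x₁, hx₁⟩ := hΦ.exists_cfun_eq_zero hcos t
  have h := (hΦ.isLocallyConstant_sq_cfun hcos t).apply_eq_of_preconnectedSpace x x₁
  exact pow_eq_zero_iff two_ne_zero |>.mp (by simpa [hx₁] using h)

end LocallyConstant

/-- On a closed connected cosymplectic manifold, for any co-Hamiltonian isotopy
`Φ = {φ_t}` the function `x ↦ ∫₀¹ η(φ̇_s)(φ_s(x)) ds` is identically zero. -/
theorem coHam_eta_integral_zero
    {E : Type*} [NormedAddCommGroup E] [NormedSpace ℝ E] [FiniteDimensional ℝ E]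
    {M : Type*} [TopologicalSpace M] [ChartedSpace E M]
    [IsManifold 𝓘(ℝ, E) (⊤ : ℕ∞) M] [CompactSpace M] [ConnectedSpace M]
    (η : M → E →L[ℝ] ℝ) (ω : M → E →L[ℝ] E →L[ℝ] ℝ)
    (hcos : IsCosymplectic η ω)
    (φ : ℝ → M → M) (F : ℝ → M → ℝ)
    (hΦ : IsCoHamIsotopy η ω φ F) :
    ∀ x : M, (∫ s in (0:ℝ)..1, Cfun η φ s x) = 0 := by
  intro x
  simp [hΦ.cfun_eq_zero hcos _ x]

end
end

section
/- Let X be a co-Hamiltonian vector field on a closed connected cosymplectic manifold (M, η, ω) with I_{η,ω}(X) = dG for a smooth function G : M → ℝ, and let Φ_X = {φ_s} be the flow of X. Then G is constant along the orbits of Φ_X: G ∘ φ_s = G for all s ∈ [0, 1]. Moreover, the function η(X) vanishes identically on M. -/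
open Manifold MeasureTheory Function Set

noncomputable section

variable {E : Type*} [NormedAddCommGroup E] [NormedSpace ℝ E]
variable {M : Type*} [TopologicalSpace M] [ChartedSpace E M]

/-! Along an orbit of `X`, the chain rule gives `d/dt G(φₜ x) = dG(X) = ω(X, X) + η(X)² = η(X)²`,
and `η(X)` is constant along the orbit because its differential vanishes. So `G` grows
affinely with slope `η(X)²` along each orbit; as `G` is bounded on the compact manifold `M`,
the slope is zero, which gives both claims at once. -/

theorem eq_add_mul_of_hasDerivAt_const {f : ℝ → ℝ} {c : ℝ} (hf : ∀ t, HasDerivAt f c t) (t : ℝ) :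
    f t = f 0 + c * t := by
  have hconst : ∀ s, HasDerivAt (fun s => f s - c * s) 0 s := fun s => by
    simpa using (hf s).fun_sub ((hasDerivAt_id' s).const_mul c)
  have := is_const_of_deriv_eq_zero (fun s => (hconst s).differentiableAt)
    (fun s => (hconst s).deriv) t 0
  simp only [mul_zero, sub_zero] at this
  linarith

open Filter in
theorem eq_zero_of_bddAbove_range_add_mul {b c : ℝ} (hc : 0 ≤ c)
    (hbdd : BddAbove (range fun t : ℝ => b + c * t)) : c = 0 := by
  by_contra hne
  exact not_bddAbove_of_tendsto_atTop
    (tendsto_atTop_add_const_left _ b (tendsto_id.const_mul_atTop (hc.lt_of_ne' hne))) hbdd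

theorem hasDerivAt_comp_isoVel {F : M → ℝ} {φ : ℝ → M → M} {x : M} {t : ℝ}
    (hF : MDifferentiableAt 𝓘(ℝ, E) 𝓘(ℝ, ℝ) F (φ t x))
    (hφ : MDifferentiableAt 𝓘(ℝ, ℝ) 𝓘(ℝ, E) (fun s => φ s x) t) :
    HasDerivAt (fun s => F (φ s x))
      (mfderiv 𝓘(ℝ, E) 𝓘(ℝ, ℝ) F (φ t x) (isoVel φ t x : E)) t := by
  have h : HasFDerivAt (fun s => F (φ s x)) (_ : ℝ →L[ℝ] ℝ) t :=
    (hF.hasMFDerivAt.comp t hφ.hasMFDerivAt).hasFDerivAt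
  exact h.hasDerivAt

theorem apply_flow_eq_add_mul {X : M → E} {φ : ℝ → M → M}
    (hφ : ∀ x, MDifferentiable 𝓘(ℝ, ℝ) 𝓘(ℝ, E) fun s => φ s x)
    (hinit : ∀ x, φ 0 x = x) (hflow : ∀ t x, isoVel φ t x = X (φ t x))
    {F : M → ℝ} (hF : MDifferentiable 𝓘(ℝ, E) 𝓘(ℝ, ℝ) F) {x : M} {c : ℝ}
    (hc : ∀ t, mfderiv 𝓘(ℝ, E) 𝓘(ℝ, ℝ) F (φ t x) (X (φ t x)) = c) (t : ℝ) :
    F (φ t x) = F x + c * t := by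
  have hderiv : ∀ s, HasDerivAt (fun s => F (φ s x)) c s := fun s => by
    simpa only [hflow, hc] using hasDerivAt_comp_isoVel (hF _) (hφ x s)
  simpa only [hinit] using eq_add_mul_of_hasDerivAt_const hderiv t

theorem energy_constant_along_orbits_general
    {E : Type*} [NormedAddCommGroup E] [NormedSpace ℝ E]
    {M : Type*} [TopologicalSpace M] [ChartedSpace E M]
    [CompactSpace M]
    (η : M → E →L[ℝ] ℝ) (ω : M → E →L[ℝ] E →L[ℝ] ℝ)
    (hcos : IsCosymplectic η ω)
    (X : M → E) (hX : ContMDiff 𝓘(ℝ, E) 𝓘(ℝ, E) (⊤ : ℕ∞) X)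
    (G : M → ℝ) (hG : ContMDiff 𝓘(ℝ, E) 𝓘(ℝ, ℝ) (⊤ : ℕ∞) G)
    (hLη : ∀ x (v : E), mfderiv 𝓘(ℝ, E) 𝓘(ℝ, ℝ) (fun y => η y (X y)) x v = 0)
    (hIX : ∀ x (v : E),
      ω x (X x) v + η x (X x) * η x v = mfderiv 𝓘(ℝ, E) 𝓘(ℝ, ℝ) G x v)
    (φ : ℝ → M → M)
    (hsmooth : ContMDiff (𝓘(ℝ, ℝ).prod 𝓘(ℝ, E)) 𝓘(ℝ, E) (⊤ : ℕ∞) fun p : ℝ × M => φ p.1 p.2)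
    (hinit : ∀ x, φ 0 x = x)
    (hflow : ∀ t x, isoVel φ t x = X (φ t x)) :
    (∀ s ∈ Icc (0:ℝ) 1, ∀ x : M, G (φ s x) = G x) ∧
      ∀ x : M, η x (X x) = 0 := by
  have hφ : ∀ x, MDifferentiable 𝓘(ℝ, ℝ) 𝓘(ℝ, E) fun s => φ s x := fun x =>
    (hsmooth.comp (contMDiff_id.prodMk contMDiff_const)).mdifferentiable (by simp)
  have hηX : ∀ x t, η (φ t x) (X (φ t x)) = η x (X x) := fun x t => by
    simpa using apply_flow_eq_add_mul hφ hinit hflow (x := x) (c := 0)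
      ((hcos.smooth_eta.clm_apply hX).mdifferentiable (by simp)) (fun t => hLη _ _) t
  have hωXX : ∀ p, ω p (X p) (X p) = 0 := fun p => by
    linarith [hcos.antisymm p (X p) (X p)]
  have hGlin : ∀ x t, G (φ t x) = G x + η x (X x) ^ 2 * t := fun x =>
    apply_flow_eq_add_mul hφ hinit hflow (hG.mdifferentiable (by simp)) fun t => by
      rw [← hIX, hωXX, hηX, zero_add, sq]
  have hηX0 : ∀ x, η x (X x) = 0 := fun x => by
    refine pow_eq_zero_iff two_ne_zero |>.mp <|
      eq_zero_of_bddAbove_range_add_mul (b := G x) (sq_nonneg _) ?_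
    refine (isCompact_range hG.continuous).bddAbove.mono ?_
    rintro _ ⟨t, rfl⟩
    exact ⟨φ t x, hGlin x t⟩
  exact ⟨fun s _ x => by simp [hGlin, hηX0], hηX0⟩

/-- Let `X` be a co-Hamiltonian vector field on a closed connected cosymplectic manifold
with `I_{η,ω}(X) = dG`, and flow `Φ_X = {φ_s}`.  Then `G` is constant along the orbits of
the flow, `G ∘ φ_s = G` for all `s ∈ [0,1]`, and moreover `η(X)` vanishes identically. -/
theorem energy_constant_along_orbits
    {E : Type*} [NormedAddCommGroup E] [NormedSpace ℝ E] [FiniteDimensional ℝ E]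
    {M : Type*} [TopologicalSpace M] [ChartedSpace E M]
    [IsManifold 𝓘(ℝ, E) (⊤ : ℕ∞) M] [CompactSpace M] [ConnectedSpace M]
    (η : M → E →L[ℝ] ℝ) (ω : M → E →L[ℝ] E →L[ℝ] ℝ)
    (hcos : IsCosymplectic η ω)
    (X : M → E) (hX : ContMDiff 𝓘(ℝ, E) 𝓘(ℝ, E) (⊤ : ℕ∞) X)
    (G : M → ℝ) (hG : ContMDiff 𝓘(ℝ, E) 𝓘(ℝ, ℝ) (⊤ : ℕ∞) G)
    (hLη : ∀ x (v : E), mfderiv 𝓘(ℝ, E) 𝓘(ℝ, ℝ) (fun y => η y (X y)) x v = 0)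
    (hLω : IsClosedOneForm fun y => ω y (X y))
    (hIX : ∀ x (v : E),
      ω x (X x) v + η x (X x) * η x v = mfderiv 𝓘(ℝ, E) 𝓘(ℝ, ℝ) G x v)
    (φ : ℝ → M → M)
    (hsmooth : ContMDiff (𝓘(ℝ, ℝ).prod 𝓘(ℝ, E)) 𝓘(ℝ, E) (⊤ : ℕ∞) fun p : ℝ × M => φ p.1 p.2)
    (hinit : ∀ x, φ 0 x = x)
    (hflow : ∀ t x, isoVel φ t x = X (φ t x)) :
    (∀ s ∈ Icc (0:ℝ) 1, ∀ x : M, G (φ s x) = G x) ∧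
      ∀ x : M, η x (X x) = 0 :=
  energy_constant_along_orbits_general η ω hcos X hX G hG hLη hIX φ hsmooth hinit hflow

end
end
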